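/- arXiv:0809.5068 — 3 statements merged into one kernel-verified Lean document; each statement's English description precedes it below -/
import Mathlib

section
/- Let A be an m × m invertible real matrix such that the unique solution v₀ of A v = 𝟙_m has all entries positive. Let U = cA + d·J with c, d > 0 and J the all-ones m×m matrix, and let β < 0. Then there exists a unique solution v of U v = -2β 𝟙_m, it is a positive scalar multiple of v₀, and it has all entries positive. -/
/-!
Since `J u = (∑ i, u i) 𝟙`, the matrix `U = cA + dJ` maps `s v₀` to `s (c + d ∑ v₀) 𝟙`, and
`c + d ∑ v₀ > 0`. Conversely, if `U u = 0` then `A u` is a multiple of `𝟙`, so injectivity of `A`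
gives `u = t v₀`; summing the entries gives `t (c + d ∑ v₀) = 0`, hence `u = 0`. So `U` is
injective and `-2β / (c + d ∑ v₀) • v₀` is the unique solution.
-/

namespace Matrix

def allOnes (ι K : Type*) [One K] : Matrix ι ι K := of fun _ _ => 1

variable {K ι : Type*} [Field K] [Fintype ι]

theorem allOnes_mulVec (u : ι → K) : allOnes ι K *ᵥ u = fun _ => ∑ i, u i := by
  ext
  simp [mulVec, dotProduct, allOnes]

variable {A : Matrix ι ι K} {v₀ : ι → K} {c d : K}

theorem smul_add_smul_allOnes_mulVec (u : ι → K) :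
    (c • A + d • allOnes ι K) *ᵥ u = fun i => c * (A *ᵥ u) i + d * ∑ j, u j := by
  ext
  simp [add_mulVec, smul_mulVec, allOnes_mulVec]

theorem smul_add_smul_allOnes_mulVec_smul (hv₀ : A *ᵥ v₀ = fun _ => 1) (s : K) :
    (c • A + d • allOnes ι K) *ᵥ (s • v₀) = fun _ => s * (c + d * ∑ i, v₀ i) := by
  ext
  simp only [smul_add_smul_allOnes_mulVec, mulVec_smul, hv₀, Pi.smul_apply, smul_eq_mul]
  ring

theorem eq_zero_of_smul_add_smul_allOnes_mulVec_eq_zero (hA : Function.Injective A.mulVec)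
    (hv₀ : A *ᵥ v₀ = fun _ => 1) (hc : c ≠ 0) (hS : c + d * ∑ i, v₀ i ≠ 0) {u : ι → K}
    (hu : (c • A + d • allOnes ι K) *ᵥ u = 0) : u = 0 := by
  set t := -(d * ∑ j, u j) / c
  have hu_eq : u = t • v₀ := hA <| by
    ext i
    have := congrFun hu i
    simp only [smul_add_smul_allOnes_mulVec, Pi.zero_apply] at this
    simp only [mulVec_smul, hv₀, Pi.smul_apply, smul_eq_mul, mul_one, t]
    field_simp
    linear_combination this
  have hsum : ∑ j, u j = t * ∑ j, v₀ j := by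
    simp [hu_eq, Finset.mul_sum]
  have ht : t = 0 := by
    have htc : t * c = -(d * ∑ j, u j) := div_mul_cancel₀ _ hc
    refine (mul_eq_zero.1 ?_).resolve_right hS
    linear_combination htc - d * hsum
  simp [hu_eq, ht]

theorem injective_smul_add_smul_allOnes_mulVec (hA : Function.Injective A.mulVec)
    (hv₀ : A *ᵥ v₀ = fun _ => 1) (hc : c ≠ 0) (hS : c + d * ∑ i, v₀ i ≠ 0) :
    Function.Injective (c • A + d • allOnes ι K).mulVec := fun u w h =>
  sub_eq_zero.1 <| eq_zero_of_smul_add_smul_allOnes_mulVec_eq_zero hA hv₀ hc hS <| by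
    rw [mulVec_sub, h, sub_self]

end Matrix

/-- If `A` is invertible with positive solution `v₀` of `A v = 𝟙`, and
`U = cA + dJ` with `c,d > 0`, `β < 0`, then `U v = -2β 𝟙` has a unique
solution, which is a positive multiple of `v₀` and has positive entries. -/
theorem stmt6 {m : ℕ} (A : Matrix (Fin m) (Fin m) ℝ) (hA : IsUnit A)
    (v₀ : Fin m → ℝ) (hv₀ : A.mulVec v₀ = fun _ => (1:ℝ))
    (hv₀pos : ∀ i, 0 < v₀ i)
    (c d : ℝ) (hc : 0 < c) (hd : 0 < d)
    (J : Matrix (Fin m) (Fin m) ℝ) (hJ : ∀ i j, J i j = 1)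
    (U : Matrix (Fin m) (Fin m) ℝ) (hU : U = c • A + d • J)
    (β : ℝ) (hβ : β < 0) :
    (∃! v : Fin m → ℝ, U.mulVec v = fun _ => -2 * β) ∧
      ∀ v : Fin m → ℝ, (U.mulVec v = fun _ => -2 * β) →
        (∃ t : ℝ, 0 < t ∧ v = t • v₀) ∧ ∀ i, 0 < v i := by
  obtain rfl : J = Matrix.allOnes (Fin m) ℝ := Matrix.ext hJ
  have hS : 0 < c + d * ∑ i, v₀ i := by
    have := Finset.sum_nonneg fun i (_ : i ∈ Finset.univ) => (hv₀pos i).le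
    positivity
  set t := -2 * β / (c + d * ∑ i, v₀ i)
  have ht : 0 < t := div_pos (by linarith) hS
  have hsol : ∀ v, U.mulVec v = (fun _ => -2 * β) ↔ v = t • v₀ := by
    intro v
    have hinj := Matrix.injective_smul_add_smul_allOnes_mulVec
      (Matrix.mulVec_injective_iff_isUnit.2 hA) hv₀ hc.ne' hS.ne'
    rw [hU, ← hinj.eq_iff (a := v), Matrix.smul_add_smul_allOnes_mulVec_smul hv₀,
      div_mul_cancel₀ _ hS.ne']
  refine ⟨⟨t • v₀, (hsol _).2 rfl, fun v hv => (hsol v).1 hv⟩, fun v hv => ?_⟩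
  obtain rfl := (hsol v).1 hv
  exact ⟨⟨t, ht, rfl⟩, fun i => mul_pos ht (hv₀pos i)⟩
end

section
/- Let (𝔫, ⟨·,·⟩) be a finite-dimensional metric skew algebra with orthonormal basis ℬ = {X_i}, structure constants α_{ij}^k = ⟨[X_i,X_j], X_k⟩, and suppose ℬ consists of eigenvectors of the nil-Ricci endomorphism with eigenvalues κ_1, ..., κ_n. Then the vector (κ_1, ..., κ_n)^T equals -½ Σ_{(i,j,k): i<j, α_{ij}^k ≠ 0} (α_{ij}^k)² · Y_{ij}^k, where Y_{ij}^k = e_i + e_j - e_k. -/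
open scoped RealInnerProductSpace

/-- The root vector `Y_{ij}^k = e_i + e_j - e_k` in `ℝ^n`. -/
def rootVec {n : ℕ} (i j k : Fin n) : Fin n → ℝ :=
  fun l => (if l = i then (1:ℝ) else 0) + (if l = j then (1:ℝ) else 0)
    - (if l = k then (1:ℝ) else 0)

/-!
Evaluating `ric` on `b k` and expanding both inner products in the orthonormal basis gives
`κ_k = -½ Σ_{j,l} (α_{kj}^l)² + ¼ Σ_{i,j} (α_{ij}^k)²`. On the other side, by skew-symmetry the
summand is symmetric in `(i, j)` and vanishes for `i = j`, so the sum over `i < j` is half the sum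
over all `(i, j)`; there the three coordinates of `Y_{ij}^k` each leave a single double sum, and
the `e_j`-part equals the `e_i`-part, again by skew-symmetry.
-/

open Finset

theorem two_nsmul_sum_sum_ite_lt {ι M : Type*} [Fintype ι] [LinearOrder ι] [AddCommMonoid M]
    {f : ι → ι → M} (hsymm : ∀ i j, f j i = f i j) (hdiag : ∀ i, f i i = 0) :
    2 • ∑ i, ∑ j, (if i < j then f i j else 0) = ∑ i, ∑ j, f i j := by
  have hsplit : ∀ i j, f i j = (if i < j then f i j else 0) + (if j < i then f j i else 0) := by
    intro i j
    rcases lt_trichotomy i j with h | rfl | h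
    · simp [h, h.not_gt]
    · simp [hdiag]
    · simp [h, h.not_gt, hsymm]
  calc 2 • ∑ i, ∑ j, (if i < j then f i j else 0)
      = ∑ i, ∑ j, (if i < j then f i j else 0) + ∑ i, ∑ j, (if j < i then f j i else 0) := by
        rw [two_nsmul, sum_comm (f := fun i j => if j < i then f j i else 0)]
    _ = ∑ i, ∑ j, f i j := by simp only [← sum_add_distrib, ← hsplit]

theorem rootVec_comm {n : ℕ} (i j l : Fin n) : rootVec i j l = rootVec j i l := by
  ext k; simp only [rootVec]; ring

theorem sum_mul_rootVec {n : ℕ} (F : Fin n → Fin n → Fin n → ℝ) (k : Fin n) :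
    ∑ i, ∑ j, ∑ l, F i j l * rootVec i j l k =
      ∑ j, ∑ l, F k j l + ∑ i, ∑ l, F i k l - ∑ i, ∑ j, F i j k := by
  simp [rootVec, mul_add, mul_sub, sum_add_distrib, sum_sub_distrib]

theorem real_inner_self_eq_sum_sq_inner {ι E : Type*} [Fintype ι] [NormedAddCommGroup E]
    [InnerProductSpace ℝ E] (b : Module.Basis ι ℝ E) (hb : Orthonormal ℝ b) (x : E) :
    ⟪x, x⟫ = ∑ i, ⟪x, b i⟫ ^ 2 := by
  rw [real_inner_self_eq_norm_sq, ← (b.toOrthonormalBasis hb).sum_sq_inner_left,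
    b.coe_toOrthonormalBasis]

open Classical in
theorem stmt12_general {L : Type*} [NormedAddCommGroup L] [InnerProductSpace ℝ L]
    {n : ℕ}
    (lb : L →ₗ[ℝ] L →ₗ[ℝ] L)
    (hskew : ∀ x y, lb x y = - lb y x)
    (b : Module.Basis (Fin n) ℝ L) (hb : Orthonormal ℝ ⇑b)
    (α : Fin n → Fin n → Fin n → ℝ)
    (hα : ∀ i j k, α i j k = ⟪lb (b i) (b j), b k⟫)
    (ric : L → L → ℝ)
    (hric : ∀ X Y, ric X Y =
      -(1/2) * ∑ i, ⟪lb X (b i), lb Y (b i)⟫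
      + (1/4) * ∑ i, ∑ j, ⟪lb (b i) (b j), X⟫ * ⟪lb (b i) (b j), Y⟫)
    (κ : Fin n → ℝ)
    (heig : ∀ i j, ric (b i) (b j) = if i = j then κ i else 0) :
    ∀ k : Fin n, κ k =
      -(1/2) * ∑ i, ∑ j, ∑ l,
        (if i < j ∧ α i j l ≠ 0 then (α i j l)^2 * rootVec i j l k else 0) := by
  intro k
  have hα_swap : ∀ i j l, α j i l = -α i j l := by
    intro i j l; rw [hα, hα, hskew, inner_neg_left]
  have hα_diag : ∀ i l, α i i l = 0 := fun i l => by linarith [hα_swap i i l]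
  have hκ : κ k = -(1/2) * ∑ j, ∑ l, α k j l ^ 2 + (1/4) * ∑ i, ∑ j, α i j k ^ 2 := by
    rw [show κ k = ric (b k) (b k) by simp [heig], hric]
    simp only [real_inner_self_eq_sum_sq_inner b hb, ← hα, sq]
  have hroot : ∑ i, ∑ j, ∑ l, α i j l ^ 2 * rootVec i j l k
      = 2 * ∑ j, ∑ l, α k j l ^ 2 - ∑ i, ∑ j, α i j k ^ 2 := by
    simp only [sum_mul_rootVec, hα_swap _ k, neg_sq]
    ring
  have hhalf := two_nsmul_sum_sum_ite_lt (f := fun i j => ∑ l, α i j l ^ 2 * rootVec i j l k)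
    (fun i j => by simp only [hα_swap i j, neg_sq, rootVec_comm j i])
    (fun i => by simp [hα_diag])
  have hdrop : ∀ i j l, (if i < j ∧ α i j l ≠ 0 then α i j l ^ 2 * rootVec i j l k else 0)
      = if i < j then α i j l ^ 2 * rootVec i j l k else 0 := by
    intro i j l; by_cases h : α i j l = 0 <;> simp [h]
  simp only [hdrop, sum_ite_irrel, sum_const_zero]
  rw [nsmul_eq_mul, Nat.cast_ofNat, hroot] at hhalf
  linarith

open Classical in
/-- The Ricci eigenvalue vector is `-½ Σ (α_{ij}^k)² Y_{ij}^k`, summed over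
nonzero structure constants with `i < j`. -/
theorem stmt12 {L : Type*} [NormedAddCommGroup L] [InnerProductSpace ℝ L]
    [FiniteDimensional ℝ L] {n : ℕ}
    (lb : L →ₗ[ℝ] L →ₗ[ℝ] L)
    (hskew : ∀ x y, lb x y = - lb y x)
    (b : Module.Basis (Fin n) ℝ L) (hb : Orthonormal ℝ ⇑b)
    (α : Fin n → Fin n → Fin n → ℝ)
    (hα : ∀ i j k, α i j k = ⟪lb (b i) (b j), b k⟫)
    (ric : L → L → ℝ)
    (hric : ∀ X Y, ric X Y =
      -(1/2) * ∑ i, ⟪lb X (b i), lb Y (b i)⟫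
      + (1/4) * ∑ i, ∑ j, ⟪lb (b i) (b j), X⟫ * ⟪lb (b i) (b j), Y⟫)
    (κ : Fin n → ℝ)
    (heig : ∀ i j, ric (b i) (b j) = if i = j then κ i else 0) :
    ∀ k : Fin n, κ k =
      -(1/2) * ∑ i, ∑ j, ∑ l,
        (if i < j ∧ α i j l ≠ 0 then (α i j l)^2 * rootVec i j l k else 0) :=
  stmt12_general lb hskew b hb α hα ric hric κ heig
end

section
/- Let 𝔫 be the (n+1)-dimensional filiform Lie algebra with orthonormal basis {X_0, X_1, ..., X_n} and brackets [X_0, X_i] = a_i X_{i+1} for i = 1,...,n-1, where a_i = √(i(n-i)). Then the endomorphism D = Ric - β·Id with β = -(n-1)n(n+1)/12 - 1 is a derivation of 𝔫, where Ric is the nil-Ricci endomorphism, whose eigenvalues are: -(n-1)n(n+1)/12 on X_0, and -(n+1)/2 + i on X_i for 1 ≤ i ≤ n. -/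
open scoped RealInnerProductSpace

/-!
The vectors `X₁, …, Xₙ` span an abelian ideal, so the bracket is determined by `T = ad X₀`:
`[x, y] = ⟪X₀, x⟫ T y - ⟪X₀, y⟫ T x`, and `T` is the weighted shift `Xₖ ↦ aₖ Xₖ₊₁`.
For brackets of this shape the nil-Ricci form is `⟪Ric x, y⟫` with
`Ric = -½ ‖T‖²_HS ⟪X₀, ·⟫ X₀ - ½ (T* T - T T*)`. Since `T* T Xᵢ = aᵢ² Xᵢ` and
`T T* Xᵢ = aᵢ₋₁² Xᵢ`, the eigenvalues are `-½ ∑ aₖ² = -(n-1)n(n+1)/12` on `X₀` and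
`½ (aᵢ₋₁² - aᵢ²) = i - (n+1)/2` on `Xᵢ`. A map `D` preserving `⟪X₀, ·⟫` up to the factor `d`
is a derivation of such a bracket as soon as `D T = T D + d T`; for the diagonal `D = Ric - β`
this holds with `d = 1` because the eigenvalues of `Ric` increase by one along the shift.
-/

section NilRicci

variable {L : Type*} [NormedAddCommGroup L] [InnerProductSpace ℝ L]

noncomputable def nilRicci {ι : Type*} [Fintype ι] (lb : L →ₗ[ℝ] L →ₗ[ℝ] L) (b : ι → L)
    (x y : L) : ℝ :=
  -(1/2) * ∑ e, ⟪lb x (b e), lb y (b e)⟫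
    + (1/4) * ∑ e, ∑ f, ⟪lb (b e) (b f), x⟫ * ⟪lb (b e) (b f), y⟫

theorem OrthonormalBasis.inner_apply_of_apply_eq_smul {ι : Type*} [Fintype ι]
    (b : OrthonormalBasis ι ℝ L) {D : L →ₗ[ℝ] L} {d : ι → ℝ} (hD : ∀ i, D (b i) = d i • b i)
    (i : ι) (x : L) : ⟪b i, D x⟫ = d i * ⟪b i, x⟫ := by
  classical
  suffices innerₛₗ ℝ (b i) ∘ₗ D = d i • innerₛₗ ℝ (b i) from congr($this x)
  refine b.toBasis.ext fun j => ?_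
  by_cases h : i = j <;> simp [hD, b.inner_eq_ite, real_inner_smul_right, h]

theorem sum_range_mul_sub (m : ℕ) (c : ℝ) :
    ∑ k ∈ Finset.range m, (k : ℝ) * (c - k)
      = c * m * (m - 1) / 2 - (m - 1) * m * (2 * m - 1) / 6 := by
  induction m with
  | zero => simp
  | succ m ih => rw [Finset.sum_range_succ, ih]; push_cast; ring

section RankOneBracket

variable {lb : L →ₗ[ℝ] L →ₗ[ℝ] L} {T : L →ₗ[ℝ] L}

theorem apply_eq_inner_smul_sub_of_skew {ι : Type*} [Fintype ι] [DecidableEq ι]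
    (b : OrthonormalBasis ι ℝ L) (i₀ : ι) (hskew : ∀ x y, lb x y = -lb y x)
    (hcomm : ∀ i j, i ≠ i₀ → j ≠ i₀ → lb (b i) (b j) = 0) (x y : L) :
    lb x y = ⟪b i₀, x⟫ • lb (b i₀) y - ⟪b i₀, y⟫ • lb (b i₀) x := by
  let B := (innerₛₗ ℝ (b i₀)).smulRight (lb (b i₀))
  suffices lb = B - B.flip from congr($this x y)
  refine LinearMap.ext_basis b.toBasis b.toBasis fun i j => ?_
  have hself : lb (b i₀) (b i₀) = 0 := by
    have := hskew (b i₀) (b i₀)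
    rwa [eq_neg_iff_add_eq_zero, ← two_smul ℝ, smul_eq_zero, or_iff_right two_ne_zero] at this
  by_cases hi : i = i₀ <;> by_cases hj : j = i₀ <;>
    simp [B, hi, hj, b.inner_eq_ite, Ne.symm, hself, hcomm, hskew (b i) (b i₀)]

theorem leibniz_of_commutator_eq_smul {u : L}
    (hlb : ∀ x y, lb x y = ⟪u, x⟫ • T y - ⟪u, y⟫ • T x) {D : L →ₗ[ℝ] L} {d : ℝ}
    (hDu : ∀ x, ⟪u, D x⟫ = d * ⟪u, x⟫) (hDT : ∀ x, D (T x) = T (D x) + d • T x) (x y : L) :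
    D (lb x y) = lb (D x) y + lb x (D y) := by
  simp only [hlb, map_sub, map_smul, hDu, hDT, smul_add, mul_smul]
  module

theorem nilRicci_eq_of_eq_inner_smul_sub [FiniteDimensional ℝ L] {ι : Type*} [Fintype ι]
    [DecidableEq ι] (b : OrthonormalBasis ι ℝ L) (i₀ : ι)
    (hlb : ∀ x y, lb x y = ⟪b i₀, x⟫ • T y - ⟪b i₀, y⟫ • T x) (hT : T (b i₀) = 0) (x y : L) :
    nilRicci lb b x y = -(1/2) * (⟪b i₀, x⟫ * ⟪b i₀, y⟫ * ∑ e, ‖T (b e)‖ ^ 2 + ⟪T x, T y⟫)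
      + 1/2 * ⟪T.adjoint x, T.adjoint y⟫ := by
  have hfirst : ∀ e, ⟪lb x (b e), lb y (b e)⟫
      = ⟪b i₀, x⟫ * ⟪b i₀, y⟫ * ‖T (b e)‖ ^ 2 + if e = i₀ then ⟪T x, T y⟫ else 0 := by
    intro e
    by_cases he : e = i₀
    · simp [hlb, he, hT]
    · simp [hlb, he, Ne.symm he, b.inner_eq_ite, real_inner_smul_left, real_inner_smul_right]
      ring
  have hsecond : ∀ e f, ⟪lb (b e) (b f), x⟫ * ⟪lb (b e) (b f), y⟫
      = (if e = i₀ then ⟪T (b f), x⟫ * ⟪T (b f), y⟫ else 0)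
        + if f = i₀ then ⟪T (b e), x⟫ * ⟪T (b e), y⟫ else 0 := by
    intro e f
    by_cases he : e = i₀ <;> by_cases hf : f = i₀ <;> simp [hlb, he, hf, Ne.symm, hT, b.inner_eq_ite]
  have hparseval : ∑ f, ⟪T (b f), x⟫ * ⟪T (b f), y⟫ = ⟪T.adjoint x, T.adjoint y⟫ := by
    rw [← b.sum_inner_mul_inner]
    refine Finset.sum_congr rfl fun f _ => ?_
    rw [LinearMap.adjoint_inner_left, LinearMap.adjoint_inner_right, real_inner_comm x]
  simp only [nilRicci, hfirst, hsecond, Finset.sum_add_distrib, ← Finset.mul_sum]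
  rw [Finset.sum_comm (f := fun e f => if e = i₀ then _ else 0)]
  simp only [Finset.sum_ite_eq', Finset.mem_univ, if_true, hparseval]
  ring

end RankOneBracket

/- `T` is the weighted shift `X k ↦ w k • X (k + 1)` on the orthonormal basis `X 0, …, X n`.
Since `w 0 = w n = 0`, the junk vector `X (n + 1)` never matters, and neither does the truncation
in `k - 1` at `k = 0`. -/
section WeightedShift

variable {n : ℕ} {b : OrthonormalBasis (Fin (n + 1)) ℝ L} {X : ℕ → L} {T : L →ₗ[ℝ] L}
  {w : ℕ → ℝ}

theorem inner_family_eq_ite (hX : ∀ i : Fin (n + 1), b i = X i) {p q : ℕ} (hp : p ≤ n)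
    (hq : q ≤ n) : ⟪X p, X q⟫ = if p = q then 1 else 0 := by
  simpa [hX, Fin.ext_iff] using b.inner_eq_ite ⟨p, by omega⟩ ⟨q, by omega⟩

theorem inner_shift_apply (hX : ∀ i : Fin (n + 1), b i = X i) (hwn : w n = 0)
    (hT : ∀ k ≤ n, T (X k) = w k • X (k + 1)) {p q : ℕ} (hp : p ≤ n) (hq : q ≤ n) :
    ⟪X p, T (X q)⟫ = if p = q + 1 then w q else 0 := by
  rcases hq.lt_or_eq with hq | rfl
  · rw [hT q hq.le, real_inner_smul_right, inner_family_eq_ite hX hp hq]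
    split_ifs <;> simp
  · simp [hT q le_rfl, hwn]

theorem apply_shift_eq_shift_apply_add (hX : ∀ i : Fin (n + 1), b i = X i) (hw₀ : w 0 = 0)
    (hwn : w n = 0) (hT : ∀ k ≤ n, T (X k) = w k • X (k + 1)) {D : L →ₗ[ℝ] L} {d : ℕ → ℝ}
    {c : ℝ} (hD : ∀ k ≤ n, D (X k) = d k • X k)
    (hd : ∀ k, 1 ≤ k → k < n → d (k + 1) = d k + c) (x : L) :
    D (T x) = T (D x) + c • T x := by
  suffices D ∘ₗ T = T ∘ₗ D + c • T from congr($this x)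
  refine b.toBasis.ext fun j => ?_
  simp only [LinearMap.comp_apply, LinearMap.add_apply, LinearMap.smul_apply, b.coe_toBasis, hX,
    hD j j.is_le, map_smul, hT j j.is_le]
  by_cases hj : 1 ≤ (j : ℕ) ∧ (j : ℕ) < n
  · rw [hD (j + 1) hj.2, hd j hj.1 hj.2]
    module
  · have hw : w j = 0 := by
      rcases (by omega : (j : ℕ) = 0 ∨ (j : ℕ) = n) with h | h <;> simp [h, hw₀, hwn]
    simp [hw]

theorem sum_norm_shift_sq (hX : ∀ i : Fin (n + 1), b i = X i) (hwn : w n = 0)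
    (hT : ∀ k ≤ n, T (X k) = w k • X (k + 1)) :
    ∑ e, ‖T (b e)‖ ^ 2 = ∑ k ∈ Finset.range (n + 1), w k ^ 2 := by
  rw [← Fin.sum_univ_eq_sum_range]
  refine Finset.sum_congr rfl fun e _ => ?_
  rw [hX, hT e e.is_le, norm_smul, mul_pow, Real.norm_eq_abs, sq_abs]
  rcases e.is_le.lt_or_eq with he | he
  · rw [← real_inner_self_eq_norm_sq, inner_family_eq_ite hX he he, if_pos rfl, mul_one]
  · simp [he, hwn]

variable [FiniteDimensional ℝ L]

theorem adjoint_shift_apply (hX : ∀ i : Fin (n + 1), b i = X i) (hw₀ : w 0 = 0)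
    (hwn : w n = 0) (hT : ∀ k ≤ n, T (X k) = w k • X (k + 1)) {k : ℕ} (hk : k ≤ n) :
    T.adjoint (X k) = w (k - 1) • X (k - 1) := by
  refine InnerProductSpace.ext_inner_right_basis b.toBasis fun j => ?_
  rw [b.coe_toBasis, hX, LinearMap.adjoint_inner_left, inner_shift_apply hX hwn hT hk j.is_le,
    real_inner_smul_left, inner_family_eq_ite hX (by omega) j.is_le]
  rcases Nat.eq_zero_or_pos k with rfl | hk₀
  · simp [hw₀]
  · split_ifs <;> first | omega | simp_all

theorem adjoint_shift_shift_apply (hX : ∀ i : Fin (n + 1), b i = X i) (hw₀ : w 0 = 0)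
    (hwn : w n = 0) (hT : ∀ k ≤ n, T (X k) = w k • X (k + 1)) {k : ℕ} (hk : k ≤ n) :
    T.adjoint (T (X k)) = w k ^ 2 • X k := by
  rcases hk.lt_or_eq with hk | rfl
  · rw [hT k hk.le, map_smul, adjoint_shift_apply hX hw₀ hwn hT (k := k + 1) hk, smul_smul,
      Nat.add_sub_cancel, sq]
  · simp [hT k le_rfl, hwn]

theorem shift_adjoint_shift_apply (hX : ∀ i : Fin (n + 1), b i = X i) (hw₀ : w 0 = 0)
    (hwn : w n = 0) (hT : ∀ k ≤ n, T (X k) = w k • X (k + 1)) {k : ℕ} (hk : k ≤ n) :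
    T (T.adjoint (X k)) = w (k - 1) ^ 2 • X k := by
  rcases Nat.eq_zero_or_pos k with rfl | hk₀
  · simp [adjoint_shift_apply hX hw₀ hwn hT hk, hw₀]
  · rw [adjoint_shift_apply hX hw₀ hwn hT hk, map_smul, hT (k - 1) (by omega), smul_smul, sq,
      Nat.sub_add_cancel hk₀]

theorem nilRicci_family_apply (hX : ∀ i : Fin (n + 1), b i = X i) (hw₀ : w 0 = 0)
    (hwn : w n = 0) (hT : ∀ k ≤ n, T (X k) = w k • X (k + 1)) {lb : L →ₗ[ℝ] L →ₗ[ℝ] L}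
    (hlb : ∀ x y, lb x y = ⟪X 0, x⟫ • T y - ⟪X 0, y⟫ • T x) {k : ℕ} (hk : k ≤ n) (y : L) :
    nilRicci lb b (X k) y = -(1/2) * ((if k = 0 then ∑ j ∈ Finset.range (n + 1), w j ^ 2 else 0)
      + w k ^ 2 - w (k - 1) ^ 2) * ⟪X k, y⟫ := by
  have hb₀ : b 0 = X 0 := hX 0
  have hT₀ : T (b 0) = 0 := by simp [hb₀, hT 0 (Nat.zero_le n), hw₀]
  rw [nilRicci_eq_of_eq_inner_smul_sub b 0 (hb₀ ▸ hlb) hT₀, sum_norm_shift_sq hX hwn hT,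
    ← T.adjoint_inner_left, T.adjoint_inner_right, adjoint_shift_shift_apply hX hw₀ hwn hT hk,
    shift_adjoint_shift_apply hX hw₀ hwn hT hk, hb₀]
  simp only [real_inner_smul_left]
  rcases Nat.eq_zero_or_pos k with rfl | hk₀
  · simp only [inner_family_eq_ite hX hk hk, if_true, one_mul]
    ring
  · simp only [inner_family_eq_ite hX (Nat.zero_le n) hk, hk₀.ne', hk₀.ne, if_false]
    ring

end WeightedShift

end NilRicci

noncomputable def filiformWeight (n k : ℕ) : ℝ := √(k * (n - k))

theorem filiformWeight_zero (n : ℕ) : filiformWeight n 0 = 0 := by simp [filiformWeight]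

theorem filiformWeight_self (n : ℕ) : filiformWeight n n = 0 := by simp [filiformWeight]

theorem filiformWeight_sq {n k : ℕ} (hk : k ≤ n) : filiformWeight n k ^ 2 = k * (n - k) :=
  Real.sq_sqrt (mul_nonneg k.cast_nonneg (sub_nonneg.mpr (by exact_mod_cast hk)))

theorem sum_filiformWeight_sq (n : ℕ) :
    ∑ k ∈ Finset.range (n + 1), filiformWeight n k ^ 2 = ((n : ℝ) - 1) * n * (n + 1) / 6 := by
  rw [Finset.sum_congr rfl fun k hk =>
    filiformWeight_sq (Nat.lt_succ_iff.mp (Finset.mem_range.mp hk)), sum_range_mul_sub]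
  push_cast
  ring

theorem filiformWeight_sq_sub {n k : ℕ} (hk₀ : 1 ≤ k) (hk : k ≤ n) :
    filiformWeight n k ^ 2 - filiformWeight n (k - 1) ^ 2 = n + 1 - 2 * k := by
  rw [filiformWeight_sq hk, filiformWeight_sq (by omega), Nat.cast_sub hk₀]
  push_cast
  ring

theorem apply_zero_eq_filiformWeight_smul {L : Type*} [AddCommGroup L] [Module ℝ L] {n : ℕ}
    {lb : L →ₗ[ℝ] L →ₗ[ℝ] L} {X : ℕ → L}
    (hbr : ∀ i, 1 ≤ i → i ≤ n - 1 → lb (X 0) (X i) = filiformWeight n i • X (i + 1))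
    (hzero : ∀ i j, i ≤ n → j ≤ n → ¬(i = 0 ∧ 1 ≤ j ∧ j ≤ n - 1) →
      ¬(j = 0 ∧ 1 ≤ i ∧ i ≤ n - 1) → lb (X i) (X j) = 0)
    (k : ℕ) (hk : k ≤ n) : lb (X 0) (X k) = filiformWeight n k • X (k + 1) := by
  by_cases hk' : 1 ≤ k ∧ k ≤ n - 1
  · exact hbr k hk'.1 hk'.2
  · have hw : filiformWeight n k = 0 := by
      rcases (by omega : k = 0 ∨ k = n) with rfl | rfl
      exacts [filiformWeight_zero n, filiformWeight_self k]
    rw [hzero 0 k (Nat.zero_le n) hk (by tauto) (by omega), hw, zero_smul]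

theorem stmt19_general {L : Type*} [NormedAddCommGroup L] [InnerProductSpace ℝ L]
    [FiniteDimensional ℝ L] {n : ℕ}
    (lb : L →ₗ[ℝ] L →ₗ[ℝ] L)
    (hskew : ∀ x y, lb x y = - lb y x)
    (b : Module.Basis (Fin (n+1)) ℝ L) (hb : Orthonormal ℝ ⇑b)
    (X : ℕ → L) (hXb : ∀ i : Fin (n+1), b i = X i.val)
    (hbr : ∀ i : ℕ, 1 ≤ i → i ≤ n - 1 →
      lb (X 0) (X i) = Real.sqrt ((i : ℝ) * ((n : ℝ) - i)) • X (i+1))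
    (hzero : ∀ i j : ℕ, i ≤ n → j ≤ n →
      ¬(i = 0 ∧ 1 ≤ j ∧ j ≤ n - 1) → ¬(j = 0 ∧ 1 ≤ i ∧ i ≤ n - 1) →
      lb (X i) (X j) = 0)
    (ric : L → L → ℝ)
    (hric : ∀ x y, ric x y =
      -(1/2) * ∑ e, ⟪lb x (b e), lb y (b e)⟫
      + (1/4) * ∑ e, ∑ f, ⟪lb (b e) (b f), x⟫ * ⟪lb (b e) (b f), y⟫)
    (κ : ℕ → ℝ)
    (hκ0 : κ 0 = -(((n:ℝ) - 1) * n * (n + 1)) / 12)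
    (hκ : ∀ i : ℕ, 1 ≤ i → i ≤ n → κ i = -((n:ℝ) + 1) / 2 + i)
    (β : ℝ) (hβ : β = -(((n:ℝ) - 1) * n * (n + 1)) / 12 - 1)
    (D : L →ₗ[ℝ] L)
    (hD : ∀ i : Fin (n+1), D (b i) = (κ i.val - β) • b i) :
    (∀ x y, D (lb x y) = lb (D x) y + lb x (D y)) ∧
      ∀ i : Fin (n+1), ∀ w, ric (b i) w = κ i.val * ⟪b i, w⟫ := by
  set B := b.toOrthonormalBasis hb
  have hB : ⇑B = ⇑b := b.coe_toOrthonormalBasis hb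
  have hBX : ∀ i : Fin (n + 1), B i = X i := by simpa [hB] using hXb
  have had := apply_zero_eq_filiformWeight_smul hbr hzero
  have hlb : ∀ x y, lb x y = ⟪X 0, x⟫ • lb (X 0) y - ⟪X 0, y⟫ • lb (X 0) x := by
    simpa only [hBX, Fin.val_zero] using apply_eq_inner_smul_sub_of_skew B 0 hskew
      fun i j hi hj => by
        rw [hBX, hBX]
        exact hzero i j i.is_le j.is_le (fun h => hi (Fin.ext h.1)) (fun h => hj (Fin.ext h.1))
  have hDX : ∀ k ≤ n, D (X k) = (κ k - β) • X k := fun k hk => by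
    simpa [hXb] using hD ⟨k, by omega⟩
  refine ⟨leibniz_of_commutator_eq_smul hlb (d := 1) ?_ ?_, fun i y => ?_⟩
  · intro x
    have := B.inner_apply_of_apply_eq_smul (d := fun i => κ i - β) (by simpa [hB] using hD) 0 x
    simpa [hBX, hκ0, hβ] using this
  · refine apply_shift_eq_shift_apply_add hBX (filiformWeight_zero n) (filiformWeight_self n) had
      hDX fun k hk hkn => ?_
    rw [hκ k hk hkn.le, hκ (k + 1) (by omega) hkn]
    push_cast
    ring
  · have hric' : ric (b i) y = nilRicci lb B (b i) y := by rw [hric, nilRicci, hB]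
    rw [hric', hXb, nilRicci_family_apply hBX (filiformWeight_zero n) (filiformWeight_self n) had
      hlb i.is_le]
    congr 1
    rcases Nat.eq_zero_or_pos (i : ℕ) with hi | hi
    · rw [hi, if_pos rfl, sum_filiformWeight_sq, hκ0]
      ring
    · rw [if_neg hi.ne', hκ i hi i.is_le, add_sub_assoc, filiformWeight_sq_sub hi i.is_le]
      ring

/-- For the filiform nilsoliton metric Lie algebra `L_n` with brackets
`[X_0, X_i] = √(i(n-i)) X_{i+1}`, the map `D = Ric - β·Id` with
`β = -(n-1)n(n+1)/12 - 1` is a derivation, and the nil-Ricci endomorphism has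
eigenvalue `-(n-1)n(n+1)/12` on `X_0` and `-(n+1)/2 + i` on `X_i`. -/
theorem stmt19 {L : Type*} [NormedAddCommGroup L] [InnerProductSpace ℝ L]
    [FiniteDimensional ℝ L] {n : ℕ} (hn : 2 ≤ n)
    (lb : L →ₗ[ℝ] L →ₗ[ℝ] L)
    (hskew : ∀ x y, lb x y = - lb y x)
    (b : Module.Basis (Fin (n+1)) ℝ L) (hb : Orthonormal ℝ ⇑b)
    (X : ℕ → L) (hXb : ∀ i : Fin (n+1), b i = X i.val)
    (hbr : ∀ i : ℕ, 1 ≤ i → i ≤ n - 1 →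
      lb (X 0) (X i) = Real.sqrt ((i : ℝ) * ((n : ℝ) - i)) • X (i+1))
    (hzero : ∀ i j : ℕ, i ≤ n → j ≤ n →
      ¬(i = 0 ∧ 1 ≤ j ∧ j ≤ n - 1) → ¬(j = 0 ∧ 1 ≤ i ∧ i ≤ n - 1) →
      lb (X i) (X j) = 0)
    (ric : L → L → ℝ)
    (hric : ∀ x y, ric x y =
      -(1/2) * ∑ e, ⟪lb x (b e), lb y (b e)⟫
      + (1/4) * ∑ e, ∑ f, ⟪lb (b e) (b f), x⟫ * ⟪lb (b e) (b f), y⟫)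
    (κ : ℕ → ℝ)
    (hκ0 : κ 0 = -(((n:ℝ) - 1) * n * (n + 1)) / 12)
    (hκ : ∀ i : ℕ, 1 ≤ i → i ≤ n → κ i = -((n:ℝ) + 1) / 2 + i)
    (β : ℝ) (hβ : β = -(((n:ℝ) - 1) * n * (n + 1)) / 12 - 1)
    (D : L →ₗ[ℝ] L)
    (hD : ∀ i : Fin (n+1), D (b i) = (κ i.val - β) • b i) :
    (∀ x y, D (lb x y) = lb (D x) y + lb x (D y)) ∧
      ∀ i : Fin (n+1), ∀ w, ric (b i) w = κ i.val * ⟪b i, w⟫ :=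
  stmt19_general lb hskew b hb X hXb hbr hzero ric hric κ hκ0 hκ β hβ D hD
end
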